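/- Let (f_N) be a sequence of differentiable convex functions from ℝ to ℝ converging pointwise to a function f. If f is differentiable at a point x, then for any sequence (x_N) converging to x, the derivatives f_N'(x_N) converge to f'(x). -/

import Mathlib

open Filter Set Topology

/-!
Convexity makes secant slopes squeeze derivatives: for `y < x_N < z`,
`slope f_N y x_N ≤ f_N' x_N ≤ slope f_N x_N z`. These secant slopes converge to those of `f`
once `f_N (x_N) → f x`, which holds because convex functions are locally Lipschitz with
constants controlled by slopes at fixed points, and those converge. Taking `y, z` close to `x`,
differentiability of `f` at `x` pins both bounds near `f' x`.
-/

lemma tendsto_slope_of_tendsto {ι : Type*} {l : Filter ι} {f : ι → ℝ → ℝ} {g : ℝ → ℝ}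
    {as bs : ι → ℝ} {a b : ℝ} (hfa : Tendsto (fun i => f i (as i)) l (𝓝 (g a)))
    (hfb : Tendsto (fun i => f i (bs i)) l (𝓝 (g b))) (has : Tendsto as l (𝓝 a))
    (hbs : Tendsto bs l (𝓝 b)) (hab : a ≠ b) :
    Tendsto (fun i => slope (f i) (as i) (bs i)) l (𝓝 (slope g a b)) := by
  simp only [slope_def_field]
  exact (hfb.sub hfa).div (hbs.sub has) (sub_ne_zero.2 hab.symm)

lemma ConvexOn.abs_slope_le_max {f : ℝ → ℝ} (hf : ConvexOn ℝ univ f) {x z δ : ℝ}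
    (hz : |z - x| ≤ δ) :
    |slope f x z| ≤ max |slope f x (x - δ)| |slope f x (x + δ)| := by
  rcases eq_or_ne z x with rfl | hzx
  · simp
  have hδ : 0 < δ := (abs_pos.2 (sub_ne_zero.2 hzx)).trans_le hz
  have hmono := hf.slope_mono (mem_univ x)
  have mem : ∀ w ≠ x, w ∈ univ \ {x} := fun w hw => ⟨trivial, hw⟩
  rw [abs_le] at hz
  exact abs_le_max_abs_abs
    (hmono (mem _ (by linarith)) (mem _ hzx) (by linarith))
    (hmono (mem _ hzx) (mem _ (by linarith)) (by linarith))

lemma tendsto_apply_of_convexOn {ι : Type*} {l : Filter ι} {f : ι → ℝ → ℝ} {g : ℝ → ℝ}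
    (hconv : ∀ i, ConvexOn ℝ univ (f i)) (hlim : ∀ y, Tendsto (fun i => f i y) l (𝓝 (g y)))
    {x : ℝ} {xs : ι → ℝ} (hxs : Tendsto xs l (𝓝 x)) :
    Tendsto (fun i => f i (xs i)) l (𝓝 (g x)) := by
  have hfixed : ∀ y ≠ x, Tendsto (fun i => slope (f i) x y) l (𝓝 (slope g x y)) :=
    fun y hy => tendsto_slope_of_tendsto (hlim x) (hlim y) tendsto_const_nhds
      tendsto_const_nhds hy.symm
  have hbound : IsBoundedUnder (· ≤ ·) l fun i => ‖slope (f i) x (xs i)‖ := by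
    refine (((hfixed (x - 1) (by linarith)).abs.max
      (hfixed (x + 1) (by linarith)).abs).isBoundedUnder_le).mono_le ?_
    have hnear : ∀ᶠ i in l, |xs i - x| ≤ 1 :=
      (hxs.sub_const x).abs.eventually (eventually_le_nhds (by simp))
    filter_upwards [hnear] with i hi
    exact (hconv i).abs_slope_le_max hi
  have hsmall : Tendsto (fun i => (xs i - x) * slope (f i) x (xs i)) l (𝓝 0) :=
    (tendsto_sub_nhds_zero_iff.2 hxs).zero_mul_isBoundedUnder_le hbound
  have hsplit : ∀ i, f i (xs i) = f i x + (xs i - x) * slope (f i) x (xs i) := fun i => by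
    rw [← smul_eq_mul, sub_smul_slope, vsub_eq_sub, add_sub_cancel]
  simpa [← hsplit] using (hlim x).add hsmall

theorem tendsto_deriv_of_convexOn {ι : Type*} {l : Filter ι} {f : ι → ℝ → ℝ} {g : ℝ → ℝ}
    {g' x : ℝ} {xs : ι → ℝ} (hconv : ∀ i, ConvexOn ℝ univ (f i))
    (hdiff : ∀ i, DifferentiableAt ℝ (f i) (xs i))
    (hlim : ∀ y, Tendsto (fun i => f i y) l (𝓝 (g y))) (hg : HasDerivAt g g' x)
    (hxs : Tendsto xs l (𝓝 x)) :
    Tendsto (fun i => deriv (f i) (xs i)) l (𝓝 g') := by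
  have hval := tendsto_apply_of_convexOn hconv hlim hxs
  have hsecant : ∀ y ≠ x, Tendsto (fun i => slope (f i) y (xs i)) l (𝓝 (slope g x y)) :=
    fun y hy => slope_comm g y x ▸ tendsto_slope_of_tendsto (hlim y) hval tendsto_const_nhds hxs hy
  have hslope (s : Set ℝ) (hs : x ∉ s) : Tendsto (slope g x) (𝓝[s] x) (𝓝 g') :=
    (hasDerivWithinAt_iff_tendsto_slope' hs).1 hg.hasDerivWithinAt
  rw [tendsto_order]
  constructor
  · intro a ha
    obtain ⟨y, hay, hyx⟩ : ∃ y, a < slope g x y ∧ y < x :=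
      ((hslope (Iio x) (lt_irrefl x)).eventually (lt_mem_nhds ha) |>.and self_mem_nhdsWithin).exists
    filter_upwards [(hsecant y hyx.ne).eventually (lt_mem_nhds hay),
      hxs.eventually (lt_mem_nhds hyx)] with i hai hyi
    exact hai.trans_le ((hconv i).slope_le_deriv trivial trivial hyi (hdiff i))
  · intro a ha
    obtain ⟨y, hya, hxy⟩ : ∃ y, slope g x y < a ∧ x < y :=
      ((hslope (Ioi x) (lt_irrefl x)).eventually (gt_mem_nhds ha) |>.and self_mem_nhdsWithin).exists
    filter_upwards [(hsecant y hxy.ne').eventually (gt_mem_nhds hya),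
      hxs.eventually (gt_mem_nhds hxy)] with i hia hiy
    rw [slope_comm] at hia
    exact ((hconv i).deriv_le_slope trivial trivial hiy (hdiff i)).trans_lt hia

/-- If `f_N` is a sequence of differentiable convex functions on `ℝ` converging pointwise to
`f`, `f` is differentiable at `x`, and `x_N → x`, then `f_N' (x_N) → f' (x)`. -/
theorem stmt0 (f : ℕ → ℝ → ℝ) (g : ℝ → ℝ)
    (hconv : ∀ n, ConvexOn ℝ Set.univ (f n))
    (hdiff : ∀ n, Differentiable ℝ (f n))
    (hlim : ∀ y : ℝ, Tendsto (fun n => f n y) atTop (nhds (g y)))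
    (x : ℝ) (hg : DifferentiableAt ℝ g x)
    (xs : ℕ → ℝ) (hxs : Tendsto xs atTop (nhds x)) :
    Tendsto (fun n => deriv (f n) (xs n)) atTop (nhds (deriv g x)) :=
  tendsto_deriv_of_convexOn hconv (fun n => hdiff n _) hlim hg.hasDerivAt hxs
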